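/- For distinct cutsets T, T' of a graph G and any choices of component-vertex tuples v, v', the monomial primes P_T(v) and P_{T'}(v') do not contain one another; likewise for a fixed cutset T and distinct tuples u ≠ v, P_T(u) and P_T(v) are incomparable. Consequently every P_T(v) is a minimal prime (associated prime) of in_<(J_G). -/

import Mathlib

open MvPolynomial

noncomputable section

/-- The depth of a ring `A` with respect to an ideal `m`: the supremum of lengths of
regular sequences on `A` consisting of elements of `m`. -/
def ringDepth (A : Type*) [CommRing A] (m : Ideal A) : ℕ∞ :=
  sSup {d : ℕ∞ | ∃ l : List A, (∀ r ∈ l, r ∈ m) ∧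
    RingTheory.Sequence.IsRegular A l ∧ d = l.length}

/-- The graded maximal ideal of a polynomial ring, generated by all variables. -/
def mvMaxIdeal (K : Type*) [Field K] (σ : Type*) : Ideal (MvPolynomial σ K) :=
  Ideal.span (Set.range (X : σ → MvPolynomial σ K))

/-- The depth of the quotient of a polynomial ring by an ideal, with respect to the image of
the graded maximal ideal. -/
def quotDepth {K : Type*} [Field K] {σ : Type*} (I : Ideal (MvPolynomial σ K)) : ℕ∞ :=
  ringDepth (MvPolynomial σ K ⧸ I) ((mvMaxIdeal K σ).map (Ideal.Quotient.mk I))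

/-- An ideal `I` of a polynomial ring is Cohen-Macaulay if `depth = Krull dimension`
for the quotient ring. -/
def IsCM {K : Type*} [Field K] {σ : Type*} (I : Ideal (MvPolynomial σ K)) : Prop :=
  (quotDepth I : WithBot ℕ∞) = ringKrullDim (MvPolynomial σ K ⧸ I)

/-- The height of an ideal: the infimum of heights of primes containing it. -/
def idealHeight {A : Type*} [CommRing A] (I : Ideal A) : ℕ∞ :=
  sInf {h : ℕ∞ | ∃ p : PrimeSpectrum A, I ≤ p.asIdeal ∧ Order.height p = h}

/-- An ideal is unmixed if all of its minimal primes have the same height. -/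
def IsUnmixed {A : Type*} [CommRing A] (I : Ideal A) : Prop :=
  ∀ p ∈ I.minimalPrimes, ∀ q ∈ I.minimalPrimes, idealHeight p = idealHeight q

/-- The binomial edge ideal of a graph `G`, in `K[x_i, y_i : i ∈ V(G)]`, where `x_i`
corresponds to `Sum.inl i` and `y_i` to `Sum.inr i`. -/
def beIdeal (K : Type*) [Field K] {V : Type*} (G : SimpleGraph V) :
    Ideal (MvPolynomial (V ⊕ V) K) :=
  Ideal.span {f | ∃ i j, G.Adj i j ∧
    f = X (Sum.inl i) * X (Sum.inr j) - X (Sum.inl j) * X (Sum.inr i)}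

/-- The number of connected components of a graph. -/
def numComp {V : Type*} (G : SimpleGraph V) : ℕ := Nat.card G.ConnectedComponent

/-- `c_G(T)`: the number of connected components of `G \ T`. -/
def compCount {n : ℕ} (G : SimpleGraph (Fin n)) (T : Finset (Fin n)) : ℕ :=
  numComp (G.induce ((↑T : Set (Fin n))ᶜ))

/-- `T` is a cutset of `G`: every `t ∈ T` is a cut vertex of `G \ (T \ {t})`. -/
def IsCutset {n : ℕ} (G : SimpleGraph (Fin n)) (T : Finset (Fin n)) : Prop :=
  ∀ t ∈ T, compCount G (T.erase t) < compCount G T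

/-- `v` is a cut vertex of `G`: its removal increases the number of connected components. -/
def IsCutVertex {V : Type*} (G : SimpleGraph V) (v : V) : Prop :=
  numComp G < numComp (G.induce ({v}ᶜ : Set V))

/-- `v` is a free (simplicial) vertex of `G`: its neighbourhood induces a complete graph. -/
def IsFreeVertex {V : Type*} (G : SimpleGraph V) (v : V) : Prop :=
  ∀ a b, G.Adj v a → G.Adj v b → a ≠ b → G.Adj a b

/-- `G_v`: the graph `G` with all edges added between distinct neighbours of `v`. -/
def nbhdComplete {V : Type*} (G : SimpleGraph V) (v : V) : SimpleGraph V where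
  Adj i j := G.Adj i j ∨ (i ≠ j ∧ G.Adj v i ∧ G.Adj v j)
  symm := by
    constructor
    intro a b h
    rcases h with h | ⟨hne, h1, h2⟩
    · exact Or.inl h.symm
    · exact Or.inr ⟨hne.symm, h2, h1⟩
  loopless := by
    constructor
    intro a h
    rcases h with h | ⟨hne, _, _⟩
    · exact G.irrefl h
    · exact hne rfl

/-- The graph obtained from `G` by attaching a whisker (pendant vertex `none`) at `v`. -/
def addWhisker {V : Type*} (G : SimpleGraph V) (v : V) : SimpleGraph (Option V) where
  Adj a b := (∃ i j, a = some i ∧ b = some j ∧ G.Adj i j) ∨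
    (a = none ∧ b = some v) ∨ (a = some v ∧ b = none)
  symm := by
    constructor
    intro a b h
    rcases h with ⟨i, j, ha, hb, hadj⟩ | ⟨ha, hb⟩ | ⟨ha, hb⟩
    · exact Or.inl ⟨j, i, hb, ha, hadj.symm⟩
    · exact Or.inr (Or.inr ⟨hb, ha⟩)
    · exact Or.inr (Or.inl ⟨hb, ha⟩)
  loopless := by
    constructor
    intro a h
    rcases h with ⟨i, j, ha, hb, hadj⟩ | ⟨ha, hb⟩ | ⟨ha, hb⟩
    · obtain rfl : i = j := Option.some.inj (ha.symm.trans hb)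
      exact G.irrefl hadj
    · exact absurd (ha ▸ hb) (by simp)
    · exact absurd (hb ▸ ha) (by simp)


/-- A (monic) monomial in a polynomial ring. -/
def IsMonomial {K : Type*} [Field K] {σ : Type*} (f : MvPolynomial σ K) : Prop :=
  ∃ d : σ →₀ ℕ, f = monomial d 1

/-- A monomial ideal: an ideal generated by a set of monomials. -/
def IsMonomialIdeal {K : Type*} [Field K] {σ : Type*} (I : Ideal (MvPolynomial σ K)) : Prop :=
  ∃ S : Set (MvPolynomial σ K), (∀ f ∈ S, IsMonomial f) ∧ I = Ideal.span S

/-- The rank of a variable in the order `x₁ > ⋯ > xₙ > y₁ > ⋯ > yₙ`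
(smaller rank = bigger variable). -/
def varRank {n : ℕ} : Fin n ⊕ Fin n → ℕ
  | Sum.inl i => (i : ℕ)
  | Sum.inr i => n + (i : ℕ)

/-- Lexicographic comparison of exponent vectors induced by `x₁ > ⋯ > xₙ > y₁ > ⋯ > yₙ`:
`d` is lex-smaller than `e`. -/
def lexLt {n : ℕ} (d e : (Fin n ⊕ Fin n) →₀ ℕ) : Prop :=
  ∃ s, (∀ t, varRank t < varRank s → d t = e t) ∧ d s < e s

/-- The initial ideal of `I` with respect to the lexicographic order induced by
`x₁ > ⋯ > xₙ > y₁ > ⋯ > yₙ`: generated by leading monomials of nonzero elements of `I`. -/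
def initialIdeal {K : Type*} [Field K] {n : ℕ}
    (I : Ideal (MvPolynomial (Fin n ⊕ Fin n) K)) : Ideal (MvPolynomial (Fin n ⊕ Fin n) K) :=
  Ideal.span {m | ∃ f ∈ I, ∃ d ∈ f.support,
    (∀ e ∈ f.support, e ≠ d → lexLt e d) ∧ m = monomial d 1}

/-- `i` and `j` lie outside `T` and in the same connected component of `G \ T`. -/
def sameComp {n : ℕ} (G : SimpleGraph (Fin n)) (T : Finset (Fin n)) (i j : Fin n) : Prop :=
  ∃ (hi : i ∈ ((↑T : Set (Fin n))ᶜ)) (hj : j ∈ ((↑T : Set (Fin n))ᶜ)),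
    (G.induce ((↑T : Set (Fin n))ᶜ)).Reachable ⟨i, hi⟩ ⟨j, hj⟩

/-- The minimal prime `P_T(G)` of the binomial edge ideal: generated by the variables
indexed by `T` together with the binomial edge ideals of the complete graphs on the
connected components of `G \ T`. -/
def PT (K : Type*) [Field K] {n : ℕ} (G : SimpleGraph (Fin n)) (T : Finset (Fin n)) :
    Ideal (MvPolynomial (Fin n ⊕ Fin n) K) :=
  Ideal.span ({f | ∃ i ∈ T, f = X (Sum.inl i) ∨ f = X (Sum.inr i)} ∪
    {f | ∃ i j, i ≠ j ∧ sameComp G T i j ∧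
      f = X (Sum.inl i) * X (Sum.inr j) - X (Sum.inl j) * X (Sum.inr i)})

/-- `vc` is a choice of one vertex in each connected component of `G \ T` (encoded as a
function assigning to each vertex outside `T` the chosen vertex of its component). -/
def IsCompChoice {n : ℕ} (G : SimpleGraph (Fin n)) (T : Finset (Fin n))
    (vc : Fin n → Fin n) : Prop :=
  (∀ i, i ∉ T → sameComp G T i (vc i)) ∧ (∀ i j, sameComp G T i j → vc i = vc j)

/-- The monomial prime `P_T(v)` associated to a cutset `T` and a choice `vc` of one
vertex in each component of `G \ T`. -/
def PTv (K : Type*) [Field K] {n : ℕ} (G : SimpleGraph (Fin n)) (T : Finset (Fin n))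
    (vc : Fin n → Fin n) : Ideal (MvPolynomial (Fin n ⊕ Fin n) K) :=
  Ideal.span ({f | ∃ i ∈ T, f = X (Sum.inl i) ∨ f = X (Sum.inr i)} ∪
    {f | ∃ i : Fin n, i ∉ T ∧ i < vc i ∧ f = X (Sum.inl i)} ∪
    {f | ∃ j : Fin n, j ∉ T ∧ vc j < j ∧ f = X (Sum.inr j)})

/-- A block of `G`: a maximal connected induced subgraph without cut vertices. -/
def IsBlock {n : ℕ} (G : SimpleGraph (Fin n)) (B : Set (Fin n)) : Prop :=
  (G.induce B).Connected ∧ (∀ w : B, ¬ IsCutVertex (G.induce B) w) ∧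
    ∀ B' : Set (Fin n), B ⊆ B' → (G.induce B').Connected →
      (∀ w : B', ¬ IsCutVertex (G.induce B') w) → B' = B

/-- The block-with-whiskers `B̄`: the induced graph on the block `B` together with one
whisker attached at each cut vertex of `G` lying in `B`. -/
def blockWhisker {n : ℕ} (G : SimpleGraph (Fin n)) (B : Set (Fin n)) :
    SimpleGraph (↥B ⊕ {w : Fin n // w ∈ B ∧ IsCutVertex G w}) where
  Adj a b := (∃ i j, a = Sum.inl i ∧ b = Sum.inl j ∧ G.Adj i j) ∨
    (∃ i c, a = Sum.inl i ∧ b = Sum.inr c ∧ (i : Fin n) = (c : Fin n)) ∨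
    (∃ i c, a = Sum.inr c ∧ b = Sum.inl i ∧ (i : Fin n) = (c : Fin n))
  symm := by
    constructor
    intro a b h
    rcases h with ⟨i, j, ha, hb, hadj⟩ | ⟨i, c, ha, hb, hic⟩ | ⟨i, c, ha, hb, hic⟩
    · exact Or.inl ⟨j, i, hb, ha, hadj.symm⟩
    · exact Or.inr (Or.inr ⟨i, c, hb, ha, hic⟩)
    · exact Or.inr (Or.inl ⟨i, c, hb, ha, hic⟩)
  loopless := by
    constructor
    intro a h
    rcases h with ⟨i, j, ha, hb, hadj⟩ | ⟨i, c, ha, hb, _⟩ | ⟨i, c, ha, hb, _⟩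
    · obtain rfl : i = j := Sum.inl.inj (ha.symm.trans hb)
      exact G.irrefl hadj
    · exact absurd (ha.symm.trans hb) (by simp)
    · exact absurd (ha.symm.trans hb) (by simp)

/-- A graph is accessible if its binomial edge ideal is unmixed and every nonempty
cutset `T` contains a vertex `t` with `T \ {t}` again a cutset. -/
def Accessible (K : Type*) [Field K] {n : ℕ} (G : SimpleGraph (Fin n)) : Prop :=
  IsUnmixed (beIdeal K G) ∧
    ∀ T : Finset (Fin n), IsCutset G T → T.Nonempty → ∃ t ∈ T, IsCutset G (T.erase t)


/-!
`P_T(v)` is generated by the variables `x_i, y_i` (`i ∈ T`), `x_i` (`i < v_i`) and `y_i`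
(`v_i < i`), so it is prime and `P_T(v) ⊆ P_{T'}(v')` just compares these sets of variables. A
vertex of `T` contributes both variables, any other vertex at most one, and exactly the chosen
vertices (`v_a = a`) contribute none. Since every `t ∈ T` has neighbours in two components of
`G \ T`, different data `(T, v)` always differ in a way these counts detect.

`in_<(J_G) ⊆ P_T(v)`: the specialization `x_i ↦ t_i s_{v_i}`, `y_i ↦ t_i` (and `0` on `T`) kills
`J_G`, and a monomial outside `P_T(v)` is lex-smallest among the monomials with the same image, so
it is never the leading monomial of an element of `J_G`.

Minimality: along a walk from `p < q`, the binomial `x_p y_q - x_q y_p` times one variable per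
vertex of the walk lies in `J_G`, and its leading monomial lies in `in_<(J_G)`. Walking from `i`
to `v_i`, or from one component through `t ∈ T` into another, and picking variables outside
`P_T(v)`, a prime `Q` with `in_<(J_G) ⊆ Q ⊆ P_T(v)` is forced to contain every generator of
`P_T(v)`.
-/

namespace MvPolynomial

section MonomialSubst

variable {R σ τ : Type*} [CommSemiring R] (p : σ → Prop) [DecidablePred p] (E : σ → τ →₀ ℕ)

def monomialSubst : MvPolynomial σ R →ₐ[R] MvPolynomial τ R :=
  aeval fun s => if p s then monomial (E s) 1 else 0

theorem monomialSubst_monomial (d : σ →₀ ℕ) (c : R) :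
    monomialSubst p E (monomial d c) =
      if ∀ s ∈ d.support, p s then monomial (Finsupp.linearCombination ℕ E d) c else 0 := by
  rw [monomialSubst, aeval_monomial, Finsupp.prod]
  split_ifs with h
  · rw [Finset.prod_congr rfl fun s hs => by rw [if_pos (h s hs), monomial_pow, one_pow],
      ← monomial_sum_one, algebraMap_eq, C_mul_monomial, mul_one,
      Finsupp.linearCombination_apply, Finsupp.sum]
  · push Not at h
    obtain ⟨s, hs, hps⟩ := h
    rw [Finset.prod_eq_zero hs (by rw [if_neg hps, zero_pow (Finsupp.mem_support_iff.mp hs)]),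
      mul_zero]

variable {p E} in
theorem exists_ne_of_monomialSubst_eq_zero {f : MvPolynomial σ R}
    (hf : monomialSubst p E f = 0) {d₀ : σ →₀ ℕ} (hd₀ : d₀ ∈ f.support)
    (hp : ∀ s ∈ d₀.support, p s) :
    ∃ d ∈ f.support, d ≠ d₀ ∧
      Finsupp.linearCombination ℕ E d = Finsupp.linearCombination ℕ E d₀ := by
  classical
  by_contra! hcon
  have hcoeff : coeff (Finsupp.linearCombination ℕ E d₀) (monomialSubst p E f) = coeff d₀ f := by
    conv_lhs => rw [f.as_sum, map_sum, coeff_sum]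
    refine (Finset.sum_eq_single d₀ (fun d hd hne => ?_) (absurd hd₀)).trans ?_
    · rw [monomialSubst_monomial]
      split_ifs
      · rw [coeff_monomial, if_neg (hcon d hd hne)]
      · exact coeff_zero _
    · rw [monomialSubst_monomial, if_pos hp, coeff_monomial, if_pos rfl]
  rw [hf, coeff_zero] at hcoeff
  exact mem_support_iff.mp hd₀ hcoeff.symm

end MonomialSubst

section SpanX

variable {R σ : Type*} [CommRing R]

theorem span_X_image_eq_ker (S : Set σ) [DecidablePred (· ∈ S)] :
    Ideal.span (X '' S : Set (MvPolynomial σ R)) =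
      RingHom.ker (monomialSubst (R := R) (· ∉ S) fun s => Finsupp.single s 1) := by
  apply le_antisymm
  · rw [Ideal.span_le]
    rintro _ ⟨s, hs, rfl⟩
    rw [SetLike.mem_coe, RingHom.mem_ker, X, monomialSubst_monomial, if_neg]
    simpa using hs
  · intro f hf
    rw [mem_ideal_span_X_image]
    intro d₀ hd₀
    by_contra! hno
    obtain ⟨d, -, hne, hd⟩ := exists_ne_of_monomialSubst_eq_zero hf hd₀ fun s hs hsS =>
      Finsupp.mem_support_iff.mp hs (hno s hsS)
    have hid : Finsupp.linearCombination ℕ (fun s : σ => Finsupp.single s 1) = LinearMap.id := by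
      ext; simp
    exact hne (by simpa [hid] using hd)

theorem isPrime_span_X_image [IsDomain R] (S : Set σ) :
    (Ideal.span (X '' S : Set (MvPolynomial σ R))).IsPrime := by
  classical
  rw [span_X_image_eq_ker]
  exact RingHom.ker_isPrime _

theorem X_mem_span_X_image_iff [Nontrivial R] {S : Set σ} {s : σ} :
    (X s : MvPolynomial σ R) ∈ Ideal.span (X '' S) ↔ s ∈ S := by
  refine ⟨fun h => ?_, fun h => Ideal.subset_span ⟨s, h, rfl⟩⟩
  obtain ⟨i, hi, hne⟩ := mem_ideal_span_X_image.mp h (Finsupp.single s 1) (by simp)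
  obtain rfl := (Finsupp.single_apply_ne_zero.mp hne).1
  exact hi

theorem span_X_image_le_span_X_image_iff [Nontrivial R] {S S' : Set σ} :
    Ideal.span (X '' S : Set (MvPolynomial σ R)) ≤ Ideal.span (X '' S') ↔ S ⊆ S' :=
  ⟨fun h _ hs => X_mem_span_X_image_iff.mp (h (X_mem_span_X_image_iff.mpr hs)),
    fun h => Ideal.span_mono (Set.image_mono h)⟩

theorem exists_X_mem_of_monomial_mem {P : Ideal (MvPolynomial σ R)} [P.IsPrime]
    {d : σ →₀ ℕ} (hd : monomial d (1 : R) ∈ P) : ∃ s ∈ d.support, X s ∈ P := by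
  rw [← prod_X_pow_eq_monomial, Ideal.IsPrime.prod_mem_iff] at hd
  obtain ⟨s, hs, hX⟩ := hd
  exact ⟨s, hs, Ideal.IsPrime.mem_of_pow_mem inferInstance _ hX⟩

end SpanX

end MvPolynomial

section LexOrder

variable {n : ℕ}

theorem varRank_injective : Function.Injective (varRank (n := n)) := by
  rintro (i | i) (j | j) h <;> simp only [varRank] at h
  · exact congrArg _ (Fin.ext h)
  · omega
  · omega
  · exact congrArg _ (Fin.ext (by omega))

theorem lexLt_asymm {d e : (Fin n ⊕ Fin n) →₀ ℕ} (h : lexLt d e) : ¬ lexLt e d := by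
  rintro ⟨s₂, hs₂, hlt₂⟩
  obtain ⟨s₁, hs₁, hlt₁⟩ := h
  rcases lt_trichotomy (varRank s₁) (varRank s₂) with h | h | h
  · rw [hs₂ s₁ h] at hlt₁; omega
  · rw [varRank_injective h] at hlt₁; omega
  · rw [hs₁ s₂ h] at hlt₂; omega

theorem exists_first_ne {d e : (Fin n ⊕ Fin n) →₀ ℕ} (hne : d ≠ e) :
    ∃ s, (∀ t, varRank t < varRank s → d t = e t) ∧ d s ≠ e s := by
  classical
  obtain ⟨s, hs, hmin⟩ := Finset.exists_min_image (Finset.univ.filter fun s => d s ≠ e s) varRank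
    (by simpa [Finset.filter_nonempty_iff] using Finsupp.ne_iff.mp hne)
  refine ⟨s, fun t ht => ?_, (Finset.mem_filter.mp hs).2⟩
  by_contra h
  exact absurd (hmin t (by simpa using h)) (by omega)

end LexOrder

section Components

open SimpleGraph

variable {n : ℕ} {G : SimpleGraph (Fin n)} {T T' : Finset (Fin n)} {i j k t : Fin n}

theorem sameComp_iff_exists_walk :
    sameComp G T i j ↔ ∃ w : G.Walk i j, ∀ v ∈ w.support, v ∉ T := by
  constructor
  · rintro ⟨hi, hj, ⟨w⟩⟩
    refine ⟨w.map (Embedding.induce _).toHom, fun v hv => ?_⟩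
    replace hv : v ∈ (w.map (Embedding.induce _).toHom).support := hv
    obtain ⟨v', -, rfl⟩ := List.mem_map.mp ((Walk.support_map _ _) ▸ hv)
    exact v'.2
  · rintro ⟨w, hw⟩
    have hw' : ∀ v ∈ w.support, v ∈ ((↑T : Set (Fin n))ᶜ) := by simpa using hw
    exact ⟨_, _, ⟨w.induce _ hw'⟩⟩

theorem sameComp.symm (h : sameComp G T i j) : sameComp G T j i :=
  let ⟨hi, hj, hr⟩ := h
  ⟨hj, hi, hr.symm⟩

theorem sameComp.trans (h₁ : sameComp G T i j) (h₂ : sameComp G T j k) : sameComp G T i k :=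
  let ⟨hi, _, hr₁⟩ := h₁
  let ⟨_, hk, hr₂⟩ := h₂
  ⟨hi, hk, hr₁.trans hr₂⟩

theorem sameComp_refl (hi : i ∉ T) : sameComp G T i i :=
  sameComp_iff_exists_walk.mpr ⟨.nil, by simpa using hi⟩

theorem sameComp_of_adj (h : G.Adj i j) (hi : i ∉ T) (hj : j ∉ T) : sameComp G T i j :=
  sameComp_iff_exists_walk.mpr ⟨.cons h .nil, by simp [hi, hj]⟩

theorem sameComp.left_notMem (h : sameComp G T i j) : i ∉ T := by
  simpa using h.1

theorem sameComp.right_notMem (h : sameComp G T i j) : j ∉ T :=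
  h.symm.left_notMem

theorem sameComp.mono (hTT' : T ⊆ T') (h : sameComp G T' i j) : sameComp G T i j := by
  obtain ⟨w, hw⟩ := sameComp_iff_exists_walk.mp h
  exact sameComp_iff_exists_walk.mpr ⟨w, fun v hv hvT => hw v hv (hTT' hvT)⟩

/-- A walk avoiding `T \ {t}` meets `t` only between two neighbours of `t`, which `hA` joins in
`G \ T`. The start `x'` may differ from `x = t` so that the induction can pass through `t`. -/
theorem sameComp_of_walk_of_forall_adj (ht : t ∈ T)
    (hA : ∀ i j, G.Adj t i → G.Adj t j → i ∉ T → j ∉ T → sameComp G T i j)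
    {x y : Fin n} (w : G.Walk x y) (hw : ∀ v ∈ w.support, v ∉ T.erase t) (hy : y ∉ T) :
    ∀ x', x' ∉ T → (x' = x ∨ x = t ∧ G.Adj t x') → sameComp G T x' y := by
  induction w with
  | nil =>
    rintro x' hx' (rfl | ⟨rfl, -⟩)
    · exact sameComp_refl hx'
    · exact absurd ht hy
  | @cons x v y hxv w ih =>
    have hv : v = t ∨ v ∉ T := by
      have := hw v (by simp)
      rw [Finset.mem_erase] at this
      tauto
    have ih := ih (fun u hu => hw u (by simp [hu])) hy
    rintro x' hx' (rfl | ⟨rfl, htx'⟩)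
    · rcases hv with rfl | hv
      · exact ih x' hx' (Or.inr ⟨rfl, hxv.symm⟩)
      · exact (sameComp_of_adj hxv hx' hv).trans (ih v hv (Or.inl rfl))
    · have hv : v ∉ T := hv.resolve_left hxv.ne.symm
      exact (hA x' v htx' hxv hx' hv).trans (ih v hv (Or.inl rfl))

theorem IsCutset.exists_adj_not_sameComp (hT : IsCutset G T) (ht : t ∈ T) :
    ∃ i j, G.Adj t i ∧ G.Adj t j ∧ i ∉ T ∧ j ∉ T ∧ ¬ sameComp G T i j := by
  by_contra! hA
  have hsub : ((↑T : Set (Fin n))ᶜ) ⊆ ((↑(T.erase t) : Set (Fin n))ᶜ) :=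
    Set.compl_subset_compl.mpr (Finset.coe_subset.mpr (Finset.erase_subset t T))
  have hinj : Function.Injective (ConnectedComponent.map (G.induceHomOfLE hsub).toHom) := by
    intro c₁ c₂ h
    induction c₁ using ConnectedComponent.ind with | h u => ?_
    induction c₂ using ConnectedComponent.ind with | h w => ?_
    rw [ConnectedComponent.map_mk, ConnectedComponent.map_mk, ConnectedComponent.eq] at h
    obtain ⟨wk, hwk⟩ := sameComp_iff_exists_walk.mp (⟨_, _, h⟩ : sameComp G (T.erase t) u w)
    have hu : (u : Fin n) ∉ T := u.2
    have hw : (w : Fin n) ∉ T := w.2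
    exact ConnectedComponent.eq.mpr
      (sameComp_of_walk_of_forall_adj ht hA wk hwk hw u hu (Or.inl rfl)).2.2
  exact (hT t ht).not_ge (Nat.card_le_card_of_injective _ hinj)

end Components

section CompChoice

variable {n : ℕ} {G : SimpleGraph (Fin n)} {T : Finset (Fin n)} {vc : Fin n → Fin n} {i j : Fin n}

theorem IsCompChoice.sameComp_apply (hc : IsCompChoice G T vc) (hi : i ∉ T) :
    sameComp G T i (vc i) :=
  hc.1 i hi

theorem IsCompChoice.eq_of_sameComp (hc : IsCompChoice G T vc) (h : sameComp G T i j) :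
    vc i = vc j :=
  hc.2 i j h

theorem IsCompChoice.notMem (hc : IsCompChoice G T vc) (hi : i ∉ T) : vc i ∉ T :=
  (hc.sameComp_apply hi).right_notMem

theorem IsCompChoice.apply_apply (hc : IsCompChoice G T vc) (hi : i ∉ T) : vc (vc i) = vc i :=
  (hc.eq_of_sameComp (hc.sameComp_apply hi)).symm

theorem IsCompChoice.ne_of_not_sameComp (hc : IsCompChoice G T vc) (hi : i ∉ T) (hj : j ∉ T)
    (h : ¬ sameComp G T i j) : vc i ≠ vc j :=
  fun he => h ((hc.sameComp_apply hi).trans (he ▸ (hc.sameComp_apply hj).symm))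

end CompChoice

section PrimeVars

open Sum

variable {K : Type*} [Field K] {n : ℕ} {G : SimpleGraph (Fin n)} {T T' : Finset (Fin n)}
  {vc vc' : Fin n → Fin n} {i : Fin n}

def primeVars (T : Finset (Fin n)) (vc : Fin n → Fin n) : Set (Fin n ⊕ Fin n) :=
  {s | s.elim (fun i => i ∈ T ∨ i < vc i) (fun j => j ∈ T ∨ vc j < j)}

@[simp]
theorem inl_mem_primeVars : inl i ∈ primeVars T vc ↔ i ∈ T ∨ i < vc i := Iff.rfl

@[simp]
theorem inr_mem_primeVars : inr i ∈ primeVars T vc ↔ i ∈ T ∨ vc i < i := Iff.rfl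

theorem PTv_eq_span_X_image (G : SimpleGraph (Fin n)) (T : Finset (Fin n))
    (vc : Fin n → Fin n) : PTv K G T vc = Ideal.span (X '' primeVars T vc) := by
  rw [PTv]
  congr 1
  ext f
  simp only [Set.mem_union, Set.mem_ofPred_eq, Set.mem_image, Sum.exists, inl_mem_primeVars,
    inr_mem_primeVars]
  aesop (add safe apply em)

theorem isPrime_PTv (G : SimpleGraph (Fin n)) (T : Finset (Fin n)) (vc : Fin n → Fin n) :
    (PTv K G T vc).IsPrime := by
  rw [PTv_eq_span_X_image]
  exact isPrime_span_X_image _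

theorem X_mem_PTv_iff {s : Fin n ⊕ Fin n} :
    (X s : MvPolynomial (Fin n ⊕ Fin n) K) ∈ PTv K G T vc ↔ s ∈ primeVars T vc := by
  rw [PTv_eq_span_X_image, X_mem_span_X_image_iff]

theorem PTv_le_PTv_iff {G' : SimpleGraph (Fin n)} :
    PTv K G T vc ≤ PTv K G' T' vc' ↔ primeVars T vc ⊆ primeVars T' vc' := by
  rw [PTv_eq_span_X_image, PTv_eq_span_X_image, span_X_image_le_span_X_image_iff]

theorem inl_notMem_primeVars (hi : i ∉ T) (h : vc i = i) : inl i ∉ primeVars T vc := by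
  simp [hi, h]

theorem inr_notMem_primeVars (hi : i ∉ T) (h : vc i = i) : inr i ∉ primeVars T vc := by
  simp [hi, h]

theorem not_primeVars_subset_of_apply_eq (hi : i ∉ T') (hi' : vc' i = i) (h : i ∈ T ∨ vc i ≠ i) :
    ¬ primeVars T vc ⊆ primeVars T' vc' := by
  intro hsub
  have : inl i ∈ primeVars T vc ∨ inr i ∈ primeVars T vc := by
    rcases h with h | h
    · simp [h]
    · rcases h.lt_or_gt with h | h <;> simp [h]
  rcases this with hs | hs
  · exact inl_notMem_primeVars hi hi' (hsub hs)
  · exact inr_notMem_primeVars hi hi' (hsub hs)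

theorem not_primeVars_subset_of_mem_of_notMem (hi : i ∈ T) (hi' : i ∉ T') :
    ¬ primeVars T vc ⊆ primeVars T' vc' := by
  intro hsub
  have hx := hsub (show inl i ∈ primeVars T vc by simp [hi])
  have hy := hsub (show inr i ∈ primeVars T vc by simp [hi])
  simp only [inl_mem_primeVars, inr_mem_primeVars, hi', false_or] at hx hy
  exact lt_asymm hx hy

theorem not_PTv_le_of_ne (hT' : IsCutset G T') (hc : IsCompChoice G T vc)
    (hc' : IsCompChoice G T' vc') (hne : T ≠ T') : ¬ PTv K G T vc ≤ PTv K G T' vc' := by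
  rw [PTv_le_PTv_iff]
  by_cases hsub : T ⊆ T'
  swap
  · obtain ⟨t, ht, ht'⟩ := Finset.not_subset.mp hsub
    exact not_primeVars_subset_of_mem_of_notMem ht ht'
  obtain ⟨t, ht', ht⟩ := Finset.exists_of_ssubset (hsub.ssubset_of_ne hne)
  obtain ⟨i, j, hti, htj, hi, hj, hij⟩ := hT'.exists_adj_not_sameComp ht'
  -- `v'_i ≠ v'_j` are fixed by `v'` but identified by `v`, so one of them is not fixed by `v`
  have hvc : vc (vc' i) = vc (vc' j) :=
    calc vc (vc' i) = vc i := (hc.eq_of_sameComp ((hc'.sameComp_apply hi).mono hsub)).symm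
      _ = vc j := hc.eq_of_sameComp ((sameComp_of_adj hti.symm (fun h => hi (hsub h)) ht).trans
          (sameComp_of_adj htj ht fun h => hj (hsub h)))
      _ = vc (vc' j) := hc.eq_of_sameComp ((hc'.sameComp_apply hj).mono hsub)
  by_cases hfix : vc (vc' i) = vc' i
  · refine not_primeVars_subset_of_apply_eq (hc'.notMem hj) (hc'.apply_apply hj) (Or.inr ?_)
    rw [← hvc, hfix]
    exact hc'.ne_of_not_sameComp hi hj hij
  · exact not_primeVars_subset_of_apply_eq (hc'.notMem hi) (hc'.apply_apply hi) (Or.inr hfix)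

theorem not_PTv_le_of_apply_ne {u v : Fin n → Fin n} (hu : IsCompChoice G T u)
    (hv : IsCompChoice G T v) (hi : i ∉ T) (hne : u i ≠ v i) : ¬ PTv K G T u ≤ PTv K G T v := by
  rw [PTv_le_PTv_iff]
  refine not_primeVars_subset_of_apply_eq (hv.notMem hi) (hv.apply_apply hi) (Or.inr ?_)
  rwa [← hu.eq_of_sameComp (hv.sameComp_apply hi)]

end PrimeVars

section InitialIdeal

open Sum Finset

variable {K : Type*} [Field K] {n : ℕ} {G : SimpleGraph (Fin n)} {T : Finset (Fin n)}
  {vc : Fin n → Fin n}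

/-- Exponents of the specialization `x_i ↦ t_i s_{v_i}`, `y_i ↦ t_i`, with `t_i = X (inl i)` and
`s_a = X (inr a)`; it identifies `x_i y_j` with `x_j y_i` whenever `v_i = v_j`. -/
def specExp (vc : Fin n → Fin n) : Fin n ⊕ Fin n → (Fin n ⊕ Fin n) →₀ ℕ
  | inl i => Finsupp.single (inl i) 1 + Finsupp.single (inr (vc i)) 1
  | inr i => Finsupp.single (inl i) 1

theorem linearCombination_specExp_inl (d : (Fin n ⊕ Fin n) →₀ ℕ) (i : Fin n) :
    Finsupp.linearCombination ℕ (specExp vc) d (inl i) = d (inl i) + d (inr i) := by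
  simp [Finsupp.linearCombination_apply, Finsupp.sum_fintype, Fintype.sum_sum_type, specExp,
    Finsupp.single_apply]

theorem linearCombination_specExp_inr (d : (Fin n ⊕ Fin n) →₀ ℕ) (a : Fin n) :
    Finsupp.linearCombination ℕ (specExp vc) d (inr a) = ∑ j with vc j = a, d (inl j) := by
  simp [Finsupp.linearCombination_apply, Finsupp.sum_fintype, Fintype.sum_sum_type, specExp,
    Finsupp.single_apply, Finset.sum_filter]

theorem beIdeal_le_ker_monomialSubst (hc : IsCompChoice G T vc) :
    beIdeal K G ≤
      RingHom.ker (monomialSubst (fun s => s.elim id id ∉ T) (specExp vc)) := by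
  rw [beIdeal, Ideal.span_le]
  rintro _ ⟨i, j, hij, rfl⟩
  rw [SetLike.mem_coe, RingHom.mem_ker, map_sub, map_mul, map_mul]
  simp only [monomialSubst, aeval_X, Sum.elim_inl, Sum.elim_inr, id]
  by_cases hi : i ∈ T
  · simp [hi]
  by_cases hj : j ∈ T
  · simp [hj]
  simp only [hi, hj, not_false_eq_true, if_true, monomial_mul, mul_one, specExp,
    hc.eq_of_sameComp (sameComp_of_adj hij hi hj)]
  rw [sub_eq_zero]
  congr 2
  abel

theorem lexLt_of_specExp_eq {d d₀ : (Fin n ⊕ Fin n) →₀ ℕ}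
    (hx : ∀ i, d₀ (inl i) ≠ 0 → vc i ≤ i) (hy : ∀ i, d₀ (inr i) ≠ 0 → i ≤ vc i) (hne : d₀ ≠ d)
    (h : Finsupp.linearCombination ℕ (specExp vc) d =
      Finsupp.linearCombination ℕ (specExp vc) d₀) :
    lexLt d₀ d := by
  have hdeg (i : Fin n) : d (inl i) + d (inr i) = d₀ (inl i) + d₀ (inr i) := by
    rw [← linearCombination_specExp_inl, ← linearCombination_specExp_inl, h]
  have hfib (a : Fin n) : ∑ j with vc j = a, d (inl j) = ∑ j with vc j = a, d₀ (inl j) := by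
    rw [← linearCombination_specExp_inr, ← linearCombination_specExp_inr, h]
  obtain ⟨s, hmin, hs⟩ := exists_first_ne hne
  rcases s with i | i
  swap
  · have hxi := hmin (inl i) (by simp only [varRank]; omega)
    have := hdeg i
    omega
  rcases hs.lt_or_gt with hlt | hgt
  · exact ⟨inl i, hmin, hlt⟩
  exfalso
  -- `d₀` has more `x_i` than `d`; balancing the fibre of `v_i` yields some `k > i` in it where
  -- `d₀` has fewer `x_k`, hence a `y_k`, and then `k ≤ v_k = v_i ≤ i`.
  obtain ⟨k, hk, hik, hlt⟩ : ∃ k, vc k = vc i ∧ i < k ∧ d₀ (inl k) < d (inl k) := by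
    by_contra! hcon
    have hle : ∀ k ∈ univ.filter (vc · = vc i), d (inl k) ≤ d₀ (inl k) := by
      intro k hk
      rcases lt_trichotomy k i with h | rfl | h
      · exact (hmin (inl k) (by simpa [varRank] using h)).ge
      · exact hgt.le
      · exact hcon k (mem_filter.mp hk).2 h
    exact (sum_lt_sum hle ⟨i, by simp, hgt⟩).ne (hfib (vc i))
  have hki : k ≤ vc i := hk ▸ hy k (by have := hdeg k; omega)
  exact absurd (hki.trans (hx i (by omega))) (not_le.mpr hik)

theorem initialIdeal_le_PTv (hc : IsCompChoice G T vc) :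
    initialIdeal (beIdeal K G) ≤ PTv K G T vc := by
  classical
  rw [initialIdeal, Ideal.span_le]
  rintro _ ⟨f, hf, d₀, hd₀, hlead, rfl⟩
  rw [SetLike.mem_coe, PTv_eq_span_X_image, mem_ideal_span_X_image, support_monomial,
    if_neg one_ne_zero]
  simp only [Finset.mem_singleton, forall_eq]
  by_contra! hd₀S
  have hd₀T : ∀ s ∈ d₀.support, s.elim id id ∉ T := by
    rintro (i | i) hs hi <;>
      exact Finsupp.mem_support_iff.mp hs (hd₀S _ (Or.inl hi))
  obtain ⟨d, hd, hne, heq⟩ :=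
    exists_ne_of_monomialSubst_eq_zero (beIdeal_le_ker_monomialSubst hc hf) hd₀ hd₀T
  refine lexLt_asymm (hlead d hd hne) (lexLt_of_specExp_eq ?_ ?_ hne.symm heq)
  · exact fun i hi => not_lt.mp fun h => hi (hd₀S _ (by simp [h]))
  · exact fun i hi => not_lt.mp fun h => hi (hd₀S _ (by simp [h]))

end InitialIdeal

section Walks

open Sum

variable {K : Type*} [Field K] {V : Type*}

def edgeBinomial (R : Type*) [CommRing R] (i j : V) : MvPolynomial (V ⊕ V) R :=
  X (inl i) * X (inr j) - X (inl j) * X (inr i)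

theorem edgeBinomial_mem_beIdeal {G : SimpleGraph V} {i j : V} (h : G.Adj i j) :
    edgeBinomial K i j ∈ beIdeal K G :=
  Ideal.subset_span ⟨i, j, h, rfl⟩

theorem X_mul_edgeBinomial {R : Type*} [CommRing R] {side : V → V ⊕ V}
    (hside : side = inl ∨ side = inr) (a b c : V) :
    X (side b) * edgeBinomial R a c =
      X (side a) * edgeBinomial R b c + X (side c) * edgeBinomial R a b := by
  rcases hside with rfl | rfl <;> simp only [edgeBinomial] <;> ring

theorem exists_monomial_mul_edgeBinomial_mem_beIdeal {G : SimpleGraph V} (χ : V → V ⊕ V)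
    (hχ : ∀ v, χ v = inl v ∨ χ v = inr v) {p q : V} (w : G.Walk p q) :
    ∃ u : (V ⊕ V) →₀ ℕ, (∀ s ∈ u.support, ∃ v ∈ w.support, s = χ v) ∧
      monomial u (1 : K) * edgeBinomial K p q ∈ beIdeal K G := by
  classical
  induction w with
  | nil => exact ⟨0, by simp, by simp [edgeBinomial]⟩
  | @cons a b c hab w ih =>
    obtain ⟨u, hu, hmem⟩ := ih
    refine ⟨u + Finsupp.single (χ b) 1, fun s hs => ?_, ?_⟩
    · rcases Finset.mem_union.mp (Finsupp.support_add hs) with hs | hs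
      · obtain ⟨v, hv, rfl⟩ := hu s hs
        exact ⟨v, by simp [hv], rfl⟩
      · exact ⟨b, by simp, by simpa using Finsupp.support_single_subset hs⟩
    · rw [monomial_add_single, pow_one, mul_assoc]
      rcases hχ b with h | h <;>
      · rw [h, X_mul_edgeBinomial (by simp), mul_add, mul_left_comm]
        exact add_mem (Ideal.mul_mem_left _ _ hmem)
          (Ideal.mul_mem_left _ _ (Ideal.mul_mem_left _ _ (edgeBinomial_mem_beIdeal hab)))

end Walks

section Minimality

open Sum SimpleGraph

variable {K : Type*} [Field K] {n : ℕ} {G : SimpleGraph (Fin n)} {T : Finset (Fin n)}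
  {vc : Fin n → Fin n}

theorem monomial_mem_initialIdeal {I : Ideal (MvPolynomial (Fin n ⊕ Fin n) K)} {p q : Fin n}
    (hpq : p < q) {u : (Fin n ⊕ Fin n) →₀ ℕ} (h : monomial u 1 * edgeBinomial K p q ∈ I) :
    monomial (u + Finsupp.single (inl p) 1 + Finsupp.single (inr q) 1) 1 ∈ initialIdeal I := by
  classical
  set d₁ := u + Finsupp.single (inl p) 1 + Finsupp.single (inr q) 1
  set d₂ := u + Finsupp.single (inl q) 1 + Finsupp.single (inr p) 1
  have hf : monomial u 1 * edgeBinomial K p q = monomial d₁ (1 : K) - monomial d₂ 1 := by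
    simp only [edgeBinomial, mul_sub, ← mul_assoc, d₁, d₂, monomial_add_single, pow_one]
  have hlex : lexLt d₂ d₁ := by
    refine ⟨inl p, fun t ht => ?_, by simp [d₁, d₂, hpq.ne']⟩
    rcases t with k | k <;> simp only [varRank] at ht
    · have hkp : p ≠ k := fun h => by subst h; omega
      have hkq : q ≠ k := fun h => by subst h; omega
      simp [d₁, d₂, hkp, hkq]
    · omega
  have hne : d₂ ≠ d₁ := fun h => lexLt_asymm hlex (h ▸ hlex)
  refine Ideal.subset_span ⟨_, h, d₁, ?_, fun e he hed => ?_, rfl⟩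
  · rw [hf, mem_support_iff, coeff_sub, coeff_monomial, coeff_monomial, if_pos rfl,
      if_neg hne]
    simp
  · rw [hf] at he
    have := support_sub _ _ _ he
    simp only [support_monomial, one_ne_zero, if_false, Finset.mem_union,
      Finset.mem_singleton] at this
    rcases this with rfl | rfl
    · exact absurd rfl hed
    · exact hlex

def avoidVar (vc : Fin n → Fin n) (i : Fin n) : Fin n ⊕ Fin n :=
  if vc i ≤ i then inl i else inr i

theorem avoidVar_eq (i : Fin n) : avoidVar vc i = inl i ∨ avoidVar vc i = inr i := by
  unfold avoidVar
  split_ifs <;> simp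

theorem avoidVar_notMem_primeVars {i : Fin n} (hi : i ∉ T) :
    avoidVar vc i ∉ primeVars T vc := by
  unfold avoidVar
  split_ifs with h
  · simpa [hi] using h
  · simpa [hi] using (not_le.mp h).le

/-- `Q` contains a variable of the leading monomial `x_p y_q ∏ χ(v)` of a walk binomial, where `χ`
picks `s` at `t` and a non-generator of `P_T(v)` elsewhere; the only generator among them is `s`. -/
theorem X_mem_of_walk {Q : Ideal (MvPolynomial (Fin n ⊕ Fin n) K)} [Q.IsPrime]
    (hJQ : initialIdeal (beIdeal K G) ≤ Q) (hQ : Q ≤ PTv K G T vc) {t : Fin n}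
    {s : Fin n ⊕ Fin n} (hs : s = inl t ∨ s = inr t) {p q : Fin n} (hpq : p < q)
    (w : G.Walk p q) (hw : ∀ v ∈ w.support, v ≠ t → v ∉ T)
    (hp : inl p ∈ primeVars T vc → inl p = s) (hq : inr q ∈ primeVars T vc → inr q = s) :
    X s ∈ Q := by
  classical
  set χ := Function.update (avoidVar vc) t s
  have hχ : ∀ v, χ v = inl v ∨ χ v = inr v := by
    intro v
    by_cases hvt : v = t
    · subst hvt
      simpa [χ] using hs
    · simpa [χ, hvt] using avoidVar_eq v
  obtain ⟨u, hu, hmem⟩ := exists_monomial_mul_edgeBinomial_mem_beIdeal (K := K) χ hχ w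
  obtain ⟨r, hr, hrQ⟩ := exists_X_mem_of_monomial_mem (hJQ (monomial_mem_initialIdeal hpq hmem))
  have hrS : r ∈ primeVars T vc := X_mem_PTv_iff.mp (hQ hrQ)
  suffices r = s by rwa [← this]
  rcases Finset.mem_union.mp (Finsupp.support_add hr) with hr | hr
  · rcases Finset.mem_union.mp (Finsupp.support_add hr) with hr | hr
    · obtain ⟨v, hv, rfl⟩ := hu r hr
      by_cases hvt : v = t
      · simp [χ, hvt]
      · simp only [χ, Function.update_of_ne hvt] at hrS
        exact absurd hrS (avoidVar_notMem_primeVars (hw v hv hvt))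
    · obtain rfl : r = inl p := by simpa using Finsupp.support_single_subset hr
      exact hp hrS
  · obtain rfl : r = inr q := by simpa using Finsupp.support_single_subset hr
    exact hq hrS

theorem X_mem_of_mem_primeVars (hT : IsCutset G T) (hc : IsCompChoice G T vc)
    {Q : Ideal (MvPolynomial (Fin n ⊕ Fin n) K)} [Q.IsPrime]
    (hJQ : initialIdeal (beIdeal K G) ≤ Q) (hQ : Q ≤ PTv K G T vc) {s : Fin n ⊕ Fin n}
    (hs : s ∈ primeVars T vc) : X s ∈ Q := by
  obtain ⟨t, hst⟩ : ∃ t, s = inl t ∨ s = inr t := by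
    rcases s with t | t <;> exact ⟨t, by simp⟩
  by_cases ht : t ∈ T
  · obtain ⟨i, j, hti, htj, hi, hj, hij⟩ := hT.exists_adj_not_sameComp ht
    wlog hlt : vc i < vc j generalizing i j
    · exact this j i htj hti hj hi (fun h => hij h.symm)
        ((hc.ne_of_not_sameComp hi hj hij).symm.lt_of_le (not_lt.mp hlt))
    obtain ⟨w₁, hw₁⟩ := sameComp_iff_exists_walk.mp (hc.sameComp_apply hi).symm
    obtain ⟨w₂, hw₂⟩ := sameComp_iff_exists_walk.mp (hc.sameComp_apply hj)
    refine X_mem_of_walk hJQ hQ hst hlt (w₁.append (.cons hti.symm (.cons htj w₂))) ?_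
      (fun h => absurd h (inl_notMem_primeVars (hc.notMem hi) (hc.apply_apply hi)))
      (fun h => absurd h (inr_notMem_primeVars (hc.notMem hj) (hc.apply_apply hj)))
    intro v hv hvt
    simp only [Walk.mem_support_append_iff, Walk.support_cons, List.mem_cons] at hv
    rcases hv with hv | rfl | rfl | hv
    · exact hw₁ v hv
    · exact hi
    · exact absurd rfl hvt
    · exact hw₂ v hv
  · obtain ⟨w, hw⟩ := sameComp_iff_exists_walk.mp (hc.sameComp_apply ht)
    rcases hst with rfl | rfl
    · exact X_mem_of_walk hJQ hQ (Or.inl rfl) (by simpa [ht] using hs) w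
        (fun v hv _ => hw v hv) (fun _ => rfl)
        (fun h => absurd h (inr_notMem_primeVars (hc.notMem ht) (hc.apply_apply ht)))
    · exact X_mem_of_walk hJQ hQ (Or.inr rfl) (by simpa [ht] using hs) w.reverse
        (fun v hv _ => hw v (by simpa using hv))
        (fun h => absurd h (inl_notMem_primeVars (hc.notMem ht) (hc.apply_apply ht)))
        (fun _ => rfl)

theorem PTv_mem_minimalPrimes (hT : IsCutset G T) (hc : IsCompChoice G T vc) :
    PTv K G T vc ∈ (initialIdeal (beIdeal K G)).minimalPrimes := by
  refine ⟨⟨isPrime_PTv G T vc, initialIdeal_le_PTv hc⟩, fun Q ⟨hQ, hJQ⟩ hQP => ?_⟩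
  rw [PTv_eq_span_X_image, Ideal.span_le]
  rintro _ ⟨s, hs, rfl⟩
  exact X_mem_of_mem_primeVars hT hc hJQ hQP hs

end Minimality

theorem stmt_6 (K : Type*) [Field K] {n : ℕ} (G : SimpleGraph (Fin n)) :
    (∀ (T T' : Finset (Fin n)) (vc vc' : Fin n → Fin n),
      IsCutset G T → IsCutset G T' → IsCompChoice G T vc → IsCompChoice G T' vc' →
      T ≠ T' → ¬ PTv K G T vc ≤ PTv K G T' vc' ∧ ¬ PTv K G T' vc' ≤ PTv K G T vc) ∧
    (∀ (T : Finset (Fin n)) (u v : Fin n → Fin n),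
      IsCutset G T → IsCompChoice G T u → IsCompChoice G T v →
      (∃ i, i ∉ T ∧ u i ≠ v i) →
      ¬ PTv K G T u ≤ PTv K G T v ∧ ¬ PTv K G T v ≤ PTv K G T u) ∧
    (∀ (T : Finset (Fin n)) (vc : Fin n → Fin n),
      IsCutset G T → IsCompChoice G T vc →
      PTv K G T vc ∈ (initialIdeal (beIdeal K G)).minimalPrimes) :=
  ⟨fun _ _ _ _ hT hT' hc hc' hne =>
      ⟨not_PTv_le_of_ne hT' hc hc' hne, not_PTv_le_of_ne hT hc' hc hne.symm⟩,
    fun _ _ _ _ hu hv ⟨_, hi, hne⟩ =>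
      ⟨not_PTv_le_of_apply_ne hu hv hi hne, not_PTv_le_of_apply_ne hv hu hi hne.symm⟩,
    fun _ _ hT hc => PTv_mem_minimalPrimes hT hc⟩
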